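/- Let $z = a_z n_z$ be an $m \times m$ upper triangular matrix with positive diagonal $a_z = \mathrm{diag}(a_1, \ldots, a_m)$ and unipotent part $n_z$ with off-diagonal entries in $[-1/2, 1/2]$, and let $\Lambda_z$ be the lattice spanned by the columns $z_1, \ldots, z_m$ of $z$. Then for each $j$, the vectors $\pm \frac{a_j}{2} e_j$ lie in the Dirichlet domain $\mathrm{Dir}(\Lambda_z)$. -/

import Mathlib

/-!
Let `x = ±(a_j/2) e_j`, let `v` be a lattice vector and `V = span {z_i | i < j}`. If `v ∈ V`,
then `v_j = 0` because `z` is upper triangular, so `‖x - v‖ ≥ |(x - v)_j| = a_j/2 = ‖x‖`.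
Otherwise reducedness gives `a_j ≤ dist(v, V) ≤ dist(x, V) + ‖x - v‖ ≤ a_j/2 + ‖x - v‖`.
-/

open Matrix

noncomputable def colVec (m : ℕ) (z : Matrix (Fin m) (Fin m) ℝ) (j : Fin m) :
    EuclideanSpace ℝ (Fin m) :=
  (WithLp.equiv 2 (Fin m → ℝ)).symm (fun i => z i j)

lemma norm_le_norm_sub_of_two_mul_norm_le_infDist {E : Type*} [SeminormedAddCommGroup E]
    {s : Set E} (h0 : (0 : E) ∈ s) {x v : E} (h : 2 * ‖x‖ ≤ Metric.infDist v s) :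
    ‖x‖ ≤ ‖x - v‖ := by
  have hx : Metric.infDist x s ≤ ‖x‖ := by
    simpa using Metric.infDist_le_dist_of_mem (x := x) h0
  have hv : Metric.infDist v s ≤ Metric.infDist x s + ‖x - v‖ := by
    simpa [dist_eq_norm, norm_sub_rev] using Metric.infDist_le_infDist_add_dist (x := v) (y := x)
  linarith

lemma EuclideanSpace.norm_single_le_norm_single_sub {ι 𝕜 : Type*} [Fintype ι] [DecidableEq ι]
    [RCLike 𝕜] {j : ι} {w : EuclideanSpace 𝕜 ι} (hw : w j = 0) (a : 𝕜) :
    ‖EuclideanSpace.single j a‖ ≤ ‖EuclideanSpace.single j a - w‖ := by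
  simpa [PiLp.norm_single, hw] using PiLp.norm_apply_le (EuclideanSpace.single j a - w) j

lemma apply_eq_zero_of_mem_span_colVec {m : ℕ} {z : Matrix (Fin m) (Fin m) ℝ}
    (hupper : ∀ i j : Fin m, j < i → z i j = 0) {j : Fin m} {w : EuclideanSpace ℝ (Fin m)}
    (hw : w ∈ Submodule.span ℝ (colVec m z '' {i | i < j})) : w j = 0 := by
  have hspan : Submodule.span ℝ (colVec m z '' {i | i < j}) ≤
      LinearMap.ker (PiLp.projₗ 2 (fun _ ↦ ℝ) j) := by
    rw [Submodule.span_le]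
    rintro _ ⟨i, hi, rfl⟩
    exact hupper j i hi
  exact hspan hw

theorem stmt9_general (m : ℕ) (z : Matrix (Fin m) (Fin m) ℝ)
    (hupper : ∀ i j : Fin m, j < i → z i j = 0)
    (hdiag : ∀ i : Fin m, 0 < z i i)
    (hred : ∀ (j : Fin m) (c : Fin m → ℤ),
        (∑ i, c i • colVec m z i) ∉ Submodule.span ℝ (colVec m z '' {i | i < j}) →
        z j j ≤ Metric.infDist (∑ i, c i • colVec m z i)
            (Submodule.span ℝ (colVec m z '' {i | i < j}) : Set (EuclideanSpace ℝ (Fin m))))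
    (j : Fin m) (s : ℝ) (hs : s = 1 ∨ s = -1) (c : Fin m → ℤ) :
    ‖s • EuclideanSpace.single j (z j j / 2)‖ ≤
      ‖s • EuclideanSpace.single j (z j j / 2) - ∑ i, c i • colVec m z i‖ := by
  set V := Submodule.span ℝ (colVec m z '' {i | i < j})
  have hsingle : s • EuclideanSpace.single j (z j j / 2) =
      EuclideanSpace.single j (s * (z j j / 2)) := by
    ext; simp
  rw [hsingle]
  by_cases hv : ∑ i, c i • colVec m z i ∈ V
  · exact EuclideanSpace.norm_single_le_norm_single_sub
      (apply_eq_zero_of_mem_span_colVec hupper hv) _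
  · refine norm_le_norm_sub_of_two_mul_norm_le_infDist V.zero_mem ?_
    have hnorm : 2 * ‖EuclideanSpace.single j (s * (z j j / 2))‖ = z j j := by
      rcases hs with rfl | rfl <;> simp [PiLp.norm_single, abs_of_pos (hdiag j)] <;> ring
    exact hnorm.trans_le (hred j c hv)

/-- If `z = a_z n_z` is upper triangular with positive diagonal, unipotent part with entries in
`[-1/2, 1/2]`, and reduced columns, then the vectors `±(a_j/2) e_j` lie in the Dirichlet
domain of the lattice spanned by the columns of `z`. -/
theorem stmt9 (m : ℕ) (z : Matrix (Fin m) (Fin m) ℝ)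
    (hupper : ∀ i j : Fin m, j < i → z i j = 0)
    (hdiag : ∀ i : Fin m, 0 < z i i)
    (hunip : ∀ i j : Fin m, i < j → |z i j| ≤ z i i / 2)
    (hred : ∀ (j : Fin m) (c : Fin m → ℤ),
        (∑ i, c i • colVec m z i) ∉ Submodule.span ℝ (colVec m z '' {i | i < j}) →
        z j j ≤ Metric.infDist (∑ i, c i • colVec m z i)
            (Submodule.span ℝ (colVec m z '' {i | i < j}) : Set (EuclideanSpace ℝ (Fin m))))
    (j : Fin m) (s : ℝ) (hs : s = 1 ∨ s = -1) (c : Fin m → ℤ) :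
    ‖s • EuclideanSpace.single j (z j j / 2)‖ ≤
      ‖s • EuclideanSpace.single j (z j j / 2) - ∑ i, c i • colVec m z i‖ :=
  stmt9_general m z hupper hdiag hred j s hs c
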